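/- Let A be an n×m real matrix, b ∈ ℝ^n, p ∈ [1,∞), Z = min_{x∈ℝ^m} ‖Ax − b‖_p, and suppose A = Uτ where U is an (α,β,p)-well-conditioned basis for the column space of A. Let 0 < ε ≤ 1/7 and r_2 > 0. Let x̂_c ∈ ℝ^m satisfy ‖Ax̂_c − b‖_p ≤ 8Z, set ρ̂ = Ax̂_c − b with ρ̂ ≠ 0, and let q_1,…,q_n ∈ (0,1] satisfy, for every i with q_i < 1: q_i ≥ r_2·|ρ̂_i|^p / ‖ρ̂‖_p^p and q_i ≥ r_2·‖U_{(i)}‖_p^p / |||U|||_p^p. Let T be a random n×n diagonal sampling matrix with probabilities q_i. Fix x_ε ∈ ℝ^m with ‖Ax_ε − Ax̂_c‖_p ≤ 12Z and ‖Ax_ε − b‖_p > (1+6ε)Z. Then the probability that ‖T(Ax_ε − b)‖_p ≤ (1+3ε)Z is at most exp(−ε²r_2 / (24^p (αβ)^p)). -/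

import Mathlib

open scoped BigOperators

/-- The entrywise `p`-norm of a vector: `(∑ i, |v i| ^ p) ^ (1/p)`. -/
noncomputable def pnorm (p : ℝ) {n : ℕ} (v : Fin n → ℝ) : ℝ :=
  (∑ i, |v i| ^ p) ^ (1 / p)

/-- The dual norm of the `p`-norm: the max-norm if `p = 1`, else the `p/(p-1)`-norm. -/
noncomputable def qnorm (p : ℝ) {n : ℕ} (v : Fin n → ℝ) : ℝ :=
  if p = 1 then ⨆ i, |v i| else pnorm (p / (p - 1)) v

/-- The entrywise `p`-norm of a matrix. -/
noncomputable def mpnorm (p : ℝ) {n d : ℕ} (M : Matrix (Fin n) (Fin d) ℝ) : ℝ :=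
  (∑ i, ∑ j, |M i j| ^ p) ^ (1 / p)

/-- `U` is an `(α, β, p)`-well-conditioned basis for the column space of `A`. -/
def IsWCB (p α β : ℝ) {n m d : ℕ} (A : Matrix (Fin n) (Fin m) ℝ)
    (U : Matrix (Fin n) (Fin d) ℝ) : Prop :=
  LinearMap.range U.mulVecLin = LinearMap.range A.mulVecLin ∧
  mpnorm p U ≤ α ∧
  ∀ z : Fin d → ℝ, qnorm p z ≤ β * pnorm p (U.mulVec z)

/-- `S : Ω → Matrix` is a random `n × n` diagonal sampling matrix with probabilities `pr`:
its diagonal entries are mutually independent, with `S ω i i = (pr i) ^ (-1/p)` with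
probability `pr i` and `S ω i i = 0` with probability `1 - pr i`. -/
structure IsSamplingMatrix {Ω : Type} [MeasurableSpace Ω] (μ : MeasureTheory.Measure Ω)
    (p : ℝ) {n : ℕ} (pr : Fin n → ℝ) (S : Ω → Matrix (Fin n) (Fin n) ℝ) : Prop where
  offdiag : ∀ ω i j, i ≠ j → S ω i j = 0
  meas : ∀ i, Measurable fun ω => S ω i i
  prob_val : ∀ i, μ {ω | S ω i i = (pr i) ^ (-(1 / p))} = ENNReal.ofReal (pr i)
  prob_zero : ∀ i, μ {ω | S ω i i = 0} = ENNReal.ofReal (1 - pr i)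
  indep : ProbabilityTheory.iIndepFun (fun i ω => S ω i i) μ

/-!
With `ρ = A xε - b` and `ρ̂ = A xc - b`, the quantity `‖T ρ‖_p ^ p = ∑ i, |T_ii|^p |ρ_i|^p` is a
sum of independent terms, the `i`-th equal to `|ρ_i|^p / q_i` with probability `q_i` and to `0`
otherwise, with mean `‖ρ‖_p ^ p > ((1 + 6ε) Z) ^ p`. Writing `ρ_i = (U τ (xε - xc))_i + ρ̂_i` and
bounding the first summand by Hölder and the well-conditioned basis, the two lower bounds on `q_i`
show that every non-constant term (`q_i < 1`) is at most `M = (24 αβ Z) ^ p / r₂`. For such terms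
the convexity of `exp` on `[0, M]` gives the lower-tail Chernoff bound
`exp ((s t ^ p - (1 - e^{-s}) ‖ρ‖_p ^ p) / M)` for the event `‖T ρ‖_p ≤ t`; with `t = (1 + 3ε) Z`
and `s = 3ε / (1 + 6ε)` the exponent is at most `-ε² Z ^ p / M = -ε² r₂ / (24 ^ p (αβ) ^ p)`.
-/

open MeasureTheory ProbabilityTheory Real Finset
open scoped Matrix

section Norms

variable {p : ℝ} {k : ℕ}

lemma pnorm_nonneg (p : ℝ) (v : Fin k → ℝ) : 0 ≤ pnorm p v := by
  unfold pnorm; positivity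

lemma pnorm_pos {v : Fin k → ℝ} (hv : v ≠ 0) : 0 < pnorm p v := by
  obtain ⟨i, hi⟩ := Function.ne_iff.mp hv
  have hsum : 0 < ∑ j, |v j| ^ p :=
    (rpow_pos_of_pos (abs_pos.mpr hi) p).trans_le
      (single_le_sum (f := fun j => |v j| ^ p) (fun j _ => by positivity) (mem_univ i))
  exact rpow_pos_of_pos hsum _

lemma pnorm_rpow (hp : p ≠ 0) (v : Fin k → ℝ) : pnorm p v ^ p = ∑ i, |v i| ^ p := by
  rw [pnorm, ← rpow_mul (by positivity), one_div, inv_mul_cancel₀ hp, rpow_one]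

lemma pnorm_single_one (hp : p ≠ 0) (j : Fin k) : pnorm p (Pi.single j 1) = 1 := by
  rw [pnorm, sum_eq_single j (fun i _ hij => by simp [hij, zero_rpow hp]) (by simp)]
  simp

lemma qnorm_nonneg (p : ℝ) (v : Fin k → ℝ) : 0 ≤ qnorm p v := by
  unfold qnorm
  split_ifs
  · exact Real.iSup_nonneg fun i => abs_nonneg (v i)
  · exact pnorm_nonneg _ _

lemma qnorm_single_one (hp : 1 ≤ p) (j : Fin k) : qnorm p (Pi.single j 1) = 1 := by
  unfold qnorm
  split_ifs with h1
  · have : Nonempty (Fin k) := ⟨j⟩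
    refine le_antisymm (ciSup_le fun i => ?_) ?_
    · by_cases hij : i = j <;> simp [hij]
    · simpa using le_ciSup (Set.finite_range fun i => |(Pi.single j 1 : Fin k → ℝ) i|).bddAbove j
  · have : 1 < p := lt_of_le_of_ne hp (Ne.symm h1)
    exact pnorm_single_one (div_pos (by linarith) (by linarith)).ne' j

lemma abs_dotProduct_le_pnorm_mul_qnorm (hp : 1 ≤ p) (a z : Fin k → ℝ) :
    |a ⬝ᵥ z| ≤ pnorm p a * qnorm p z := by
  have habs : |a ⬝ᵥ z| ≤ ∑ j, |a j| * |z j| :=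
    (abs_sum_le_sum_abs _ _).trans_eq (sum_congr rfl fun j _ => abs_mul _ _)
  unfold qnorm
  split_ifs with h1
  · subst h1
    have hz : ∀ j, |z j| ≤ ⨆ i, |z i| := le_ciSup (Set.finite_range _).bddAbove
    calc |a ⬝ᵥ z| ≤ ∑ j, |a j| * |z j| := habs
      _ ≤ ∑ j, |a j| * ⨆ i, |z i| := by gcongr with j; exact hz j
      _ = pnorm 1 a * ⨆ i, |z i| := by simp [pnorm, sum_mul]
  · have hpq : p.HolderConjugate (p / (p - 1)) :=
      Real.HolderConjugate.conjExponent (lt_of_le_of_ne hp (Ne.symm h1))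
    simpa only [abs_abs, pnorm] using habs.trans
      (inner_le_Lp_mul_Lq univ (fun j => |a j|) (fun j => |z j|) hpq)

lemma pnorm_col_le_mpnorm (hp : 0 ≤ p) {d : ℕ} (U : Matrix (Fin k) (Fin d) ℝ) (j : Fin d) :
    pnorm p (U.col j) ≤ mpnorm p U := by
  unfold pnorm mpnorm
  gcongr with i
  exact single_le_sum (f := fun j => |U i j| ^ p) (fun _ _ => by positivity) (mem_univ j)

end Norms

namespace IsWCB

variable {p α β : ℝ} {n m d : ℕ} {A : Matrix (Fin n) (Fin m) ℝ} {U : Matrix (Fin n) (Fin d) ℝ}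

lemma one_le_mul_pnorm_col (hU : IsWCB p α β A U) (hp : 1 ≤ p) (j : Fin d) :
    1 ≤ β * pnorm p (U.col j) := by
  simpa [qnorm_single_one hp, Matrix.mulVec_single_one] using hU.2.2 (Pi.single j 1)

lemma mpnorm_pos (hU : IsWCB p α β A U) (hp : 1 ≤ p) (hd : 0 < d) : 0 < mpnorm p U := by
  have hcol := hU.one_le_mul_pnorm_col hp ⟨0, hd⟩
  refine lt_of_lt_of_le ?_ (pnorm_col_le_mpnorm (by linarith) U ⟨0, hd⟩)
  exact (pnorm_nonneg _ _).lt_of_ne fun h => by rw [← h, mul_zero] at hcol; linarith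

lemma one_le_mul (hU : IsWCB p α β A U) (hp : 1 ≤ p) (hd : 0 < d) : 1 ≤ α * β := by
  have hcol := hU.one_le_mul_pnorm_col hp ⟨0, hd⟩
  have hβ : 0 < β := pos_of_mul_pos_left (by linarith) (pnorm_nonneg _ _)
  calc 1 ≤ β * pnorm p (U.col ⟨0, hd⟩) := hcol
    _ ≤ β * α := by gcongr; exact (pnorm_col_le_mpnorm (by linarith) U _).trans hU.2.1
    _ = α * β := mul_comm β α

lemma abs_mulVec_apply_le (hU : IsWCB p α β A U) (hp : 1 ≤ p) (z : Fin d → ℝ) (i : Fin n) :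
    |(U *ᵥ z) i| ≤ pnorm p (U i) * (β * pnorm p (U *ᵥ z)) :=
  (abs_dotProduct_le_pnorm_mul_qnorm hp (U i) z).trans
    (mul_le_mul_of_nonneg_left (hU.2.2 z) (pnorm_nonneg _ _))

end IsWCB

section Scalar

lemma exp_neg_le_one_sub_add_sq_div_two {s : ℝ} (hs : 0 ≤ s) : exp (-s) ≤ 1 - s + s ^ 2 / 2 := by
  -- `(1 - s + s²/2)(1 + s + s²/2) = 1 + s⁴/4` and `1 + s + s²/2 ≤ exp s`.
  rw [exp_neg, inv_le_iff_one_le_mul₀ (exp_pos s)]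
  nlinarith [quadratic_le_exp_of_nonneg hs, sq_nonneg (s ^ 2), sq_nonneg (s - 1)]

lemma exp_neg_mul_le_one_sub_mul {w : ℝ} (hw0 : 0 ≤ w) (hw1 : w ≤ 1) (s : ℝ) :
    exp (-(s * w)) ≤ 1 - w * (1 - exp (-s)) := by
  have h := convexOn_exp.2 (Set.mem_univ 0) (Set.mem_univ (-s)) (sub_nonneg.2 hw1) hw0
    (sub_add_cancel 1 w)
  simp only [smul_eq_mul, mul_zero, zero_add, exp_zero] at h
  rw [show w * -s = -(s * w) by ring] at h
  linarith

lemma two_point_exp_le {q c M s : ℝ} (hq0 : 0 < q) (hq1 : q ≤ 1) (hc : 0 ≤ c) (hM : 0 < M)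
    (hcM : q < 1 → c ≤ q * M) :
    q * exp (-(s / M) * (q⁻¹ * c)) + (1 - q) ≤ exp (-((1 - exp (-s)) / M) * c) := by
  rcases hq1.lt_or_eq with hlt | rfl
  · have hw : q⁻¹ * c / M ≤ 1 := by
      rw [div_le_one hM, inv_mul_le_iff₀ hq0]; exact hcM hlt
    have hchord := exp_neg_mul_le_one_sub_mul (by positivity) hw s
    calc q * exp (-(s / M) * (q⁻¹ * c)) + (1 - q)
        ≤ q * (1 - q⁻¹ * c / M * (1 - exp (-s))) + (1 - q) := by
          rw [show -(s / M) * (q⁻¹ * c) = -(s * (q⁻¹ * c / M)) by ring]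
          gcongr
      _ = -((1 - exp (-s)) / M) * c + 1 := by field_simp; ring
      _ ≤ exp (-((1 - exp (-s)) / M) * c) := add_one_le_exp _
  · have : 1 - exp (-s) ≤ s := by linarith [one_sub_le_exp_neg s]
    simp only [inv_one, one_mul, sub_self, add_zero, exp_le_exp]
    gcongr

lemma rpow_mul_le_mul_rpow {p x y : ℝ} (hp : 1 ≤ p) (hx : 0 ≤ x) (hxy : x ≤ y) :
    x ^ p * y ≤ x * y ^ p := by
  have hsplit : ∀ z : ℝ, 0 ≤ z → z ^ p = z * z ^ (p - 1) := fun z hz => by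
    rw [← rpow_one_add' hz (by linarith), add_sub_cancel]
  rw [hsplit x hx, hsplit y (hx.trans hxy), mul_assoc, mul_comm y]
  gcongr
  exact hx.trans hxy

lemma le_rpow_inv_mul_of_mul_rpow_div_le {p r q x y B : ℝ} (hp : 0 < p) (hr : 0 < r)
    (hq : 0 ≤ q) (hx : 0 ≤ x) (hy : 0 < y) (h : r * x ^ p / y ^ p ≤ q) (hyB : y ≤ B) :
    x ≤ (q / r) ^ p⁻¹ * B := by
  have hxp : x ^ p ≤ q / r * y ^ p := by
    rw [div_le_iff₀ (by positivity)] at h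
    rw [div_mul_eq_mul_div, le_div_iff₀ hr]
    linarith
  calc x = (x ^ p) ^ p⁻¹ := (rpow_rpow_inv hx hp.ne').symm
    _ ≤ (q / r * y ^ p) ^ p⁻¹ := by gcongr
    _ = (q / r) ^ p⁻¹ * y := by
      rw [mul_rpow (by positivity) (by positivity), rpow_rpow_inv hy.le hp.ne']
    _ ≤ (q / r) ^ p⁻¹ * B := by gcongr

/-- `s = 3ε/(1+6ε)` makes `(1 + 3ε) Z = (1 - s)(1 + 6ε) Z`, and `ε ≤ 1/7` gives `2ε² ≤ s²`. -/
lemma lower_tail_exponent_le {p ε Z N : ℝ} (hp : 1 ≤ p) (hε : 0 < ε) (hε' : ε ≤ 1 / 7)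
    (hZ : 0 < Z) (hN : (1 + 6 * ε) * Z ≤ N) :
    3 * ε / (1 + 6 * ε) * ((1 + 3 * ε) * Z) ^ p - (1 - exp (-(3 * ε / (1 + 6 * ε)))) * N ^ p
      ≤ -(ε ^ 2 * Z ^ p) := by
  set s := 3 * ε / (1 + 6 * ε)
  have hs0 : 0 ≤ s := by positivity
  have hs1 : s * (1 + 6 * ε) = 3 * ε := div_mul_cancel₀ _ (by positivity)
  have hsε : 2 * ε ^ 2 ≤ s ^ 2 := by
    have : 21 * ε ≤ 13 * s := by nlinarith
    nlinarith
  have hN0 : 0 < N := by nlinarith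
  have hx : (1 + 3 * ε) * Z ≤ (1 - s) * N := by nlinarith
  have hxp : ((1 + 3 * ε) * Z) ^ p ≤ (1 - s) * N ^ p := by
    have h := rpow_mul_le_mul_rpow hp (by positivity) (hx.trans (by nlinarith) : _ ≤ N)
    refine le_of_mul_le_mul_right ?_ hN0
    nlinarith [rpow_nonneg hN0.le p]
  have hZN : Z ^ p ≤ N ^ p := rpow_le_rpow hZ.le (by nlinarith) (by linarith)
  have hexp := exp_neg_le_one_sub_add_sq_div_two hs0
  nlinarith [rpow_nonneg hZ.le p]

end Scalar

section Sampling

variable {Ω : Type} [MeasurableSpace Ω] {μ : Measure Ω}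

lemma integral_comp_of_two_point [IsProbabilityMeasure μ] {X : Ω → ℝ} (hX : Measurable X)
    {a b q : ℝ} (hab : a ≠ b) (hq0 : 0 ≤ q) (hq1 : q ≤ 1) (ha : μ {ω | X ω = a} = ENNReal.ofReal q)
    (hb : μ {ω | X ω = b} = ENNReal.ofReal (1 - q)) (f : ℝ → ℝ) :
    ∫ ω, f (X ω) ∂μ = q * f a + (1 - q) * f b := by
  set Sa := {ω | X ω = a}
  set Sb := {ω | X ω = b}
  have hSa : MeasurableSet Sa := hX (measurableSet_singleton a)
  have hSb : MeasurableSet Sb := hX (measurableSet_singleton b)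
  have hdisj : Disjoint Sa Sb := Set.disjoint_left.2 fun ω ha hb => hab (ha.symm.trans hb)
  have hcover : ∀ᵐ ω ∂μ, ω ∈ Sa ∪ Sb := by
    refine mem_ae_iff.2 ((prob_compl_eq_zero_iff (hSa.union hSb)).2 ?_)
    rw [measure_union hdisj hSb, ha, hb, ← ENNReal.ofReal_add hq0 (by linarith)]
    simp
  have hae : (fun ω => f (X ω)) =ᵐ[μ]
      Sa.indicator (fun _ => f a) + Sb.indicator (fun _ => f b) := by
    filter_upwards [hcover] with ω hω
    rcases hω with h | h
    · simp [Set.indicator_of_mem h, Set.indicator_of_notMem (Set.disjoint_left.1 hdisj h),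
        show X ω = a from h]
    · simp [Set.indicator_of_mem h, Set.indicator_of_notMem (Set.disjoint_right.1 hdisj h),
        show X ω = b from h]
  rw [integral_congr_ae hae, integral_add' ((integrable_const _).indicator hSa)
      ((integrable_const _).indicator hSb), integral_indicator_const _ hSa,
    integral_indicator_const _ hSb, measureReal_def, measureReal_def, ha, hb,
    ENNReal.toReal_ofReal hq0, ENNReal.toReal_ofReal (by linarith), smul_eq_mul, smul_eq_mul]

namespace IsSamplingMatrix

variable {p : ℝ} {n : ℕ} {q : Fin n → ℝ} {T : Ω → Matrix (Fin n) (Fin n) ℝ}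

lemma mulVec_apply (hT : IsSamplingMatrix μ p q T) (ω : Ω) (v : Fin n → ℝ) (i : Fin n) :
    (T ω *ᵥ v) i = T ω i i * v i :=
  Fintype.sum_eq_single i fun j hj => mul_eq_zero_of_left (hT.offdiag ω i j hj.symm) _

variable [IsProbabilityMeasure μ]

lemma mgf_rpow_mul (hT : IsSamplingMatrix μ p q T) (hp : p ≠ 0) {i : Fin n}
    (hq : 0 < q i ∧ q i ≤ 1) (c t : ℝ) :
    mgf (fun ω => |T ω i i| ^ p * c) μ t = q i * exp (t * ((q i)⁻¹ * c)) + (1 - q i) := by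
  have hpos : 0 < q i ^ (-(1 / p)) := rpow_pos_of_pos hq.1 _
  have hval : |q i ^ (-(1 / p))| ^ p = (q i)⁻¹ := by
    rw [abs_of_pos hpos, ← rpow_mul hq.1.le, neg_mul, one_div, inv_mul_cancel₀ hp, rpow_neg_one]
  rw [mgf, integral_comp_of_two_point (hT.meas i) hpos.ne' hq.1.le hq.2 (hT.prob_val i)
    (hT.prob_zero i) (fun x => exp (t * (|x| ^ p * c))), hval]
  simp [zero_rpow hp]

theorem measure_pnorm_mulVec_le_le (hT : IsSamplingMatrix μ p q T) (hp : 0 < p)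
    (hq : ∀ i, 0 < q i ∧ q i ≤ 1) {v : Fin n → ℝ} {M s t : ℝ} (hM : 0 < M) (hs : 0 ≤ s)
    (hv : ∀ i, q i < 1 → |v i| ^ p ≤ q i * M) :
    μ {ω | pnorm p (T ω *ᵥ v) ≤ t} ≤
      ENNReal.ofReal (exp ((s * t ^ p - (1 - exp (-s)) * pnorm p v ^ p) / M)) := by
  set Y : Fin n → Ω → ℝ := fun i ω => |T ω i i| ^ p * |v i| ^ p
  have hYm : ∀ i, Measurable (Y i) := fun i => ((hT.meas i).abs.pow_const p).mul_const _
  have hY : ∀ ω, pnorm p (T ω *ᵥ v) ^ p = (∑ i, Y i) ω := fun ω => by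
    simp only [pnorm_rpow hp.ne', hT.mulVec_apply, abs_mul, mul_rpow (abs_nonneg _) (abs_nonneg _),
      Finset.sum_apply, Y]
  have hsub : {ω | pnorm p (T ω *ᵥ v) ≤ t} ⊆ {ω | (∑ i, Y i) ω ≤ t ^ p} := fun ω hω => by
    change pnorm p (T ω *ᵥ v) ≤ t at hω
    change (∑ i, Y i) ω ≤ t ^ p
    rw [← hY]
    exact rpow_le_rpow (pnorm_nonneg _ _) hω hp.le
  have hint : Integrable (fun ω => exp (-(s / M) * (∑ i, Y i) ω)) μ := by
    refine .of_bound (by fun_prop) 1 (ae_of_all _ fun ω => ?_)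
    rw [norm_of_nonneg (exp_pos _).le, exp_le_one_iff, ← hY]
    have : 0 ≤ s / M := by positivity
    nlinarith [rpow_nonneg (pnorm_nonneg p (T ω *ᵥ v)) p]
  have hindep : iIndepFun Y μ := hT.indep.comp (fun i x => |x| ^ p * |v i| ^ p)
    fun i => (measurable_id.abs.pow_const p).mul_const _
  have hfac : ∀ i, mgf (Y i) μ (-(s / M)) ≤ exp (-((1 - exp (-s)) / M) * |v i| ^ p) := fun i => by
    rw [hT.mgf_rpow_mul hp.ne' (hq i)]
    exact two_point_exp_le (hq i).1 (hq i).2 (by positivity) hM (hv i)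
  rw [ENNReal.le_ofReal_iff_toReal_le (measure_ne_top _ _) (exp_pos _).le, ← measureReal_def]
  calc μ.real {ω | pnorm p (T ω *ᵥ v) ≤ t}
      ≤ μ.real {ω | (∑ i, Y i) ω ≤ t ^ p} := measureReal_mono hsub
    _ ≤ exp (-(-(s / M)) * t ^ p) * mgf (∑ i, Y i) μ (-(s / M)) :=
      measure_le_le_exp_mul_mgf _ (by simp only [neg_nonpos]; positivity) hint
    _ = exp (s / M * t ^ p) * ∏ i, mgf (Y i) μ (-(s / M)) := by
      rw [neg_neg, hindep.mgf_sum hYm]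
    _ ≤ exp (s / M * t ^ p) * ∏ i, exp (-((1 - exp (-s)) / M) * |v i| ^ p) := by
      gcongr with i
      · exact fun i _ => mgf_nonneg
      · exact hfac i
    _ = exp ((s * t ^ p - (1 - exp (-s)) * pnorm p v ^ p) / M) := by
      rw [← exp_sum, ← exp_add, pnorm_rpow hp.ne', ← mul_sum]
      ring_nf

end IsSamplingMatrix

end Sampling

lemma abs_residual_rpow_le {n m d : ℕ} {A : Matrix (Fin n) (Fin m) ℝ} {b : Fin n → ℝ}
    {U : Matrix (Fin n) (Fin d) ℝ} {τ : Matrix (Fin d) (Fin m) ℝ} {p α β r₂ Z q : ℝ}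
    {xc xε : Fin m → ℝ} {i : Fin n} (hp : 1 ≤ p) (hA : A = U * τ) (hU : IsWCB p α β A U)
    (hαβ : 1 ≤ α * β) (hUpos : 0 < mpnorm p U) (hr₂ : 0 < r₂) (hZ : 0 < Z)
    (hρ : A *ᵥ xc - b ≠ 0) (hxc : pnorm p (A *ᵥ xc - b) ≤ 8 * Z)
    (hball : pnorm p (A *ᵥ xε - A *ᵥ xc) ≤ 12 * Z) (hq : 0 ≤ q)
    (hq1 : r₂ * |(A *ᵥ xc - b) i| ^ p / pnorm p (A *ᵥ xc - b) ^ p ≤ q)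
    (hq2 : r₂ * pnorm p (U i) ^ p / mpnorm p U ^ p ≤ q) :
    |(A *ᵥ xε - b) i| ^ p ≤ q * ((24 * (α * β) * Z) ^ p / r₂) := by
  have hp0 : 0 < p := by linarith
  set K := (q / r₂) ^ p⁻¹
  have hK : 0 ≤ K := by positivity
  have hα : 0 < α := hUpos.trans_le hU.2.1
  have hβ : 0 < β := pos_of_mul_pos_right (by linarith) hα.le
  have hres : |(A *ᵥ xc - b) i| ≤ K * (8 * Z) :=
    le_rpow_inv_mul_of_mul_rpow_div_le hp0 hr₂ hq (abs_nonneg _) (pnorm_pos hρ) hq1 hxc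
  have hrow : pnorm p (U i) ≤ K * α :=
    le_rpow_inv_mul_of_mul_rpow_div_le hp0 hr₂ hq (pnorm_nonneg _ _) hUpos hq2 hU.2.1
  have hdiff : |(A *ᵥ xε - A *ᵥ xc) i| ≤ K * α * (β * (12 * Z)) := by
    have hsub : A *ᵥ xε - A *ᵥ xc = U *ᵥ (τ *ᵥ (xε - xc)) := by
      rw [Matrix.mulVec_mulVec, ← hA, Matrix.mulVec_sub]
    rw [hsub] at hball ⊢
    refine (hU.abs_mulVec_apply_le hp _ i).trans ?_
    have := pnorm_nonneg p (U *ᵥ τ *ᵥ (xε - xc))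
    gcongr
  have hcoord : |(A *ᵥ xε - b) i| ≤ K * (24 * (α * β) * Z) :=
    calc |(A *ᵥ xε - b) i| = |(A *ᵥ xε - A *ᵥ xc) i + (A *ᵥ xc - b) i| := by simp
      _ ≤ K * α * (β * (12 * Z)) + K * (8 * Z) := (abs_add_le _ _).trans (add_le_add hdiff hres)
      _ ≤ K * (24 * (α * β) * Z) := by nlinarith [mul_nonneg hK hZ.le]
  calc |(A *ᵥ xε - b) i| ^ p ≤ (K * (24 * (α * β) * Z)) ^ p := by gcongr
    _ = q * ((24 * (α * β) * Z) ^ p / r₂) := by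
      rw [mul_rpow hK (by positivity), rpow_inv_rpow (by positivity) hp0.ne']
      ring

/-- **Lemma 5, single-point version: concentration at one ε-net point.**
Fix `x_ε` with `‖A x_ε - A x̂_c‖_p ≤ 12 Z` and `‖A x_ε - b‖_p > (1 + 6ε) Z`.  Then the
probability that `‖T (A x_ε - b)‖_p ≤ (1 + 3ε) Z` is at most
`exp(-ε² r₂ / (24^p (αβ)^p))`. -/
theorem eps_net_point_concentration {Ω : Type} [MeasurableSpace Ω]
    (μ : MeasureTheory.Measure Ω) [MeasureTheory.IsProbabilityMeasure μ]
    {n m d : ℕ} (A : Matrix (Fin n) (Fin m) ℝ) (b : Fin n → ℝ)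
    (U : Matrix (Fin n) (Fin d) ℝ) (τ : Matrix (Fin d) (Fin m) ℝ)
    (p α β ε r₂ Z : ℝ) (xc xε : Fin m → ℝ)
    (qpr : Fin n → ℝ) (T : Ω → Matrix (Fin n) (Fin n) ℝ)
    (hp : 1 ≤ p) (hA : A = U * τ) (hU : IsWCB p α β A U)
    (hε : 0 < ε) (hε' : ε ≤ 1 / 7) (hr₂ : 0 < r₂)
    (hZ : IsLeast {t : ℝ | ∃ x : Fin m → ℝ, t = pnorm p (A.mulVec x - b)} Z)
    (hxc : pnorm p (A.mulVec xc - b) ≤ 8 * Z)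
    (hρ : A.mulVec xc - b ≠ 0)
    (hq : ∀ i, 0 < qpr i ∧ qpr i ≤ 1)
    (hq1 : ∀ i, qpr i < 1 →
      r₂ * |(A.mulVec xc - b) i| ^ p / pnorm p (A.mulVec xc - b) ^ p ≤ qpr i)
    (hq2 : ∀ i, qpr i < 1 → r₂ * pnorm p (U i) ^ p / mpnorm p U ^ p ≤ qpr i)
    (hT : IsSamplingMatrix μ p qpr T)
    (hball : pnorm p (A.mulVec xε - A.mulVec xc) ≤ 12 * Z)
    (hfar : (1 + 6 * ε) * Z < pnorm p (A.mulVec xε - b)) :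
    μ {ω | pnorm p ((T ω).mulVec (A.mulVec xε - b)) ≤ (1 + 3 * ε) * Z} ≤
      ENNReal.ofReal (Real.exp (-(ε ^ 2 * r₂) / (24 ^ p * (α * β) ^ p))) := by
  have hZ0 : 0 < Z := by linarith [pnorm_pos (p := p) hρ]
  -- If `d = 0` then `A = 0`, so every residual has norm `Z`, contradicting `hfar`.
  have hd : 0 < d := by
    refine Nat.pos_of_ne_zero fun hd => ?_
    subst hd
    have hA0 : ∀ x, A *ᵥ x = 0 := fun x => by rw [hA]; ext i; simp [Matrix.mulVec, dotProduct]
    obtain ⟨x₀, hx₀⟩ := hZ.1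
    rw [hA0] at hx₀ hfar
    nlinarith
  have hαβ := hU.one_le_mul hp hd
  set M := (24 * (α * β) * Z) ^ p / r₂ with hM_def
  have hM : 0 < M := by positivity
  have hv : ∀ i, qpr i < 1 → |(A *ᵥ xε - b) i| ^ p ≤ qpr i * M := fun i hi =>
    abs_residual_rpow_le hp hA hU hαβ (hU.mpnorm_pos hp hd) hr₂ hZ0 hρ hxc hball (hq i).1.le
      (hq1 i hi) (hq2 i hi)
  calc _ ≤ _ := hT.measure_pnorm_mulVec_le_le (by linarith) hq hM
        (s := 3 * ε / (1 + 6 * ε)) (by positivity) hv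
    _ ≤ ENNReal.ofReal (exp (-(ε ^ 2 * Z ^ p) / M)) := by
      gcongr
      exact lower_tail_exponent_le hp hε hε' hZ0 hfar.le
    _ = ENNReal.ofReal (exp (-(ε ^ 2 * r₂) / (24 ^ p * (α * β) ^ p))) := by
      rw [hM_def, mul_rpow (by positivity) hZ0.le, mul_rpow (by norm_num) (by positivity)]
      congr 2
      field_simp
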